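/- arXiv:math/0602368 — 3 statements merged into one kernel-verified Lean document; each statement's English description precedes it below -/
import Mathlib

section
/- Let τ(y) be the formal power series with τ(0)=0 satisfying τ = y(1+τ)^4. Then φ = τ(1 − τ − τ^2) satisfies y^3 φ^4 + (4y+3)y^2 φ^3 + (6y^2+17y+3)y φ^2 + (4y^3+25y^2−14y+1)φ + y(y^2+11y−1) = 0. -/
open PowerSeries

/-!
Write `u = 1 + τ`, so that `y u⁴ = τ`. The quartic has degree 3 in `y`, hence multiplying it by
`u¹²` makes it a polynomial in `y u⁴` and `u`; replacing `y u⁴` by `τ` leaves a polynomial in `τ`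
alone, which vanishes identically once `φ = τ(1 − τ − τ²)`. Since `u` is a unit, the quartic
itself vanishes.
-/

section

variable {R : Type*} [CommRing R]

def tamariQuartic (y φ : R) : R :=
  y ^ 3 * φ ^ 4 + (4 * y + 3) * y ^ 2 * φ ^ 3
    + (6 * y ^ 2 + 17 * y + 3) * y * φ ^ 2
    + (4 * y ^ 3 + 25 * y ^ 2 - 14 * y + 1) * φ
    + y * (y ^ 2 + 11 * y - 1)

theorem tamariQuartic_mul_pow_twelve (y φ u : R) :
    tamariQuartic y φ * u ^ 12 =
      (y * u ^ 4) ^ 3 * (φ + 1) ^ 4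
        + (y * u ^ 4) ^ 2 * u ^ 4 * (3 * φ ^ 3 + 17 * φ ^ 2 + 25 * φ + 11)
        + (y * u ^ 4) * u ^ 8 * (3 * φ ^ 2 - 14 * φ - 1)
        + φ * u ^ 12 := by
  unfold tamariQuartic
  ring

theorem tamariQuartic_mul_pow_twelve_of_mul_pow_four_eq {y t : R} (h : y * (1 + t) ^ 4 = t) :
    tamariQuartic y (t * (1 - t - t ^ 2)) * (1 + t) ^ 12 = 0 := by
  rw [tamariQuartic_mul_pow_twelve, h]
  ring

theorem tamariQuartic_eq_zero_of_mul_pow_four_eq {y t : R} (hu : IsUnit (1 + t))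
    (h : y * (1 + t) ^ 4 = t) : tamariQuartic y (t * (1 - t - t ^ 2)) = 0 :=
  (hu.pow 12).mul_left_eq_zero.mp (tamariQuartic_mul_pow_twelve_of_mul_pow_four_eq h)

end

/-- If `τ` is the power series with `τ(0)=0` satisfying `τ = y(1+τ)⁴`, then
`φ = τ(1−τ−τ²)` satisfies the quartic equation for the Tamari interval series. -/
theorem tau_substitution_satisfies_quartic (τ : PowerSeries ℚ)
    (h0 : PowerSeries.constantCoeff τ = 0)
    (hτ : τ = PowerSeries.X * (1 + τ) ^ 4) :
    letI y : PowerSeries ℚ := PowerSeries.X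
    letI φ : PowerSeries ℚ := τ * (1 - τ - τ ^ 2)
    y ^ 3 * φ ^ 4 + (4 * y + 3) * y ^ 2 * φ ^ 3
      + (6 * y ^ 2 + 17 * y + 3) * y * φ ^ 2
      + (4 * y ^ 3 + 25 * y ^ 2 - 14 * y + 1) * φ
      + y * (y ^ 2 + 11 * y - 1) = 0 := by
  have hu : IsUnit (1 + τ) := isUnit_iff_constantCoeff.mpr (by simp [h0])
  exact tamariQuartic_eq_zero_of_mul_pow_four_eq hu hτ.symm
end

section
/- If τ = y(1+τ)^4 with τ(0)=0, then the coefficient of y^n in φ = τ(1−τ−τ^2) equals 2(4n+1)! / ((n+1)!(3n+2)!) for n ≥ 1. -/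
/-!
For `τ = X (1 + τ)^r`, Lagrange–Bürmann inversion in the form
`[Xⁿ] H(τ) = [Xⁿ] H(X) φ(X)ⁿ (1 - X φ'(X) / φ(X))` with `φ = (1 + X)^r` says that
`[Xⁿ] τᵏ = [Xⁿ] Xᵏ Kₙ` for the kernel `Kₙ = (1 + X)^(rn - 1) (1 - (r - 1) X)`.
Rather than proving inversion in general, we verify this directly by strong induction on `n`:
writing `τᵏ = Xᵏ (1 + τ)^(rk)` and expanding binomially expresses `[Xⁿ] τᵏ` through
coefficients of index `n - k`, where the induction hypothesis applies, and
`(1 + X)^(rk) K_(n-k) = Kₙ`; the case `k = 0` is the binomial identity `[Xⁿ] Kₙ = 0`.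
For `r = 4`, `[Xⁿ] (τ - τ² - τ³) = [Xⁿ] (X - X² - X³) Kₙ` is a combination of four binomial
coefficients, which collapses to the closed form.
-/

open PowerSeries

noncomputable section

variable {R : Type*} [CommRing R]

theorem coeff_one_add_X_pow_eq_choose (N k : ℕ) :
    coeff k ((1 + X : R⟦X⟧) ^ N) = N.choose k := by
  have hcoe : ((1 + X : R⟦X⟧) ^ N) = (((1 + Polynomial.X) ^ N : Polynomial R) : R⟦X⟧) := by
    simp
  rw [hcoe, Polynomial.coeff_coe, Polynomial.coeff_one_add_X_pow]

theorem Nat.choose_mul_succ_sub_one_succ (r m : ℕ) :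
    (r * (m + 1) - 1).choose (m + 1) = (r - 1) * (r * (m + 1) - 1).choose m := by
  have h := Nat.choose_succ_right_eq (r * (m + 1) - 1) m
  rw [show r * (m + 1) - 1 - m = (r - 1) * (m + 1) by rw [Nat.sub_one_mul]; omega] at h
  exact Nat.eq_of_mul_eq_mul_right (Nat.add_one_pos m) (h.trans (by ring))

variable (R) in
def lagrangeKernel (r n : ℕ) : R⟦X⟧ :=
  (1 + X) ^ (r * n - 1) * (1 - ((r : R⟦X⟧) - 1) * X)

theorem constantCoeff_lagrangeKernel (r n : ℕ) : constantCoeff (lagrangeKernel R r n) = 1 := by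
  simp [lagrangeKernel]

theorem coeff_lagrangeKernel_self {r n : ℕ} (hr : 0 < r) (hn : 0 < n) :
    coeff n (lagrangeKernel R r n) = 0 := by
  obtain ⟨m, rfl⟩ := Nat.exists_eq_add_one_of_ne_zero hn.ne'
  have hsplit : lagrangeKernel R r (m + 1) = (1 + X) ^ (r * (m + 1) - 1) -
      C ((r : R) - 1) * (X * (1 + X) ^ (r * (m + 1) - 1)) := by
    rw [lagrangeKernel, map_sub, map_natCast, map_one]
    ring
  rw [hsplit, map_sub, coeff_C_mul, coeff_succ_X_mul, coeff_one_add_X_pow_eq_choose,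
    coeff_one_add_X_pow_eq_choose, Nat.choose_mul_succ_sub_one_succ, Nat.cast_mul,
    Nat.cast_sub hr, Nat.cast_one, sub_self]

theorem one_add_X_pow_mul_lagrangeKernel {r m : ℕ} (hr : 0 < r) (hm : 0 < m) (k : ℕ) :
    (1 + X) ^ (r * k) * lagrangeKernel R r m = lagrangeKernel R r (k + m) := by
  rw [lagrangeKernel, lagrangeKernel, ← mul_assoc, ← pow_add]
  congr 2
  rw [Nat.mul_add, Nat.add_sub_assoc (Nat.one_le_iff_ne_zero.mpr (Nat.mul_ne_zero hr.ne' hm.ne'))]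

theorem coeff_one_add_pow_eq_of_coeff_pow_eq {f g P : R⟦X⟧} {n : ℕ}
    (h : ∀ j, coeff n (f ^ j) = coeff n (g ^ j * P)) (N : ℕ) :
    coeff n ((1 + f) ^ N) = coeff n ((1 + g) ^ N * P) := by
  rw [add_comm 1 f, add_comm 1 g, add_pow, add_pow]
  simp only [one_pow, mul_one, Finset.sum_mul, map_sum, ← map_natCast (C (R := R)),
    mul_comm _ (C _), mul_assoc, coeff_C_mul, h]

theorem coeff_pow_eq_coeff_X_pow_mul_lagrangeKernel {τ : R⟦X⟧} {r : ℕ} (hr : 0 < r)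
    (hτ : τ = X * (1 + τ) ^ r) (n k : ℕ) :
    coeff n (τ ^ k) = coeff n (X ^ k * lagrangeKernel R r n) := by
  induction n using Nat.strong_induction_on generalizing k with
  | _ n ih =>
  rcases k.eq_zero_or_pos with rfl | hk
  · rcases n.eq_zero_or_pos with rfl | hn
    · simp [constantCoeff_lagrangeKernel]
    · rw [pow_zero, pow_zero, one_mul, coeff_lagrangeKernel_self hr hn, coeff_one, if_neg hn.ne']
  have hpow : τ ^ k = X ^ k * (1 + τ) ^ (r * k) := by
    conv_lhs => rw [hτ]
    rw [mul_pow, ← pow_mul]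
  rw [hpow, coeff_X_pow_mul', coeff_X_pow_mul']
  split_ifs with hkn
  · obtain ⟨m, rfl⟩ := Nat.exists_eq_add_of_le hkn
    rw [Nat.add_sub_cancel_left, coeff_one_add_pow_eq_of_coeff_pow_eq (ih m (by omega))]
    rcases m.eq_zero_or_pos with rfl | hm
    · simp [constantCoeff_lagrangeKernel]
    · rw [one_add_X_pow_mul_lagrangeKernel hr hm]
  · rfl

end

open Nat in
theorem four_mul_choose_add_choose_sub_seven_mul_choose_add_three_mul_choose (m : ℕ) :
    (4 * (4 * m + 3).choose m + (4 * m + 4).choose m - 7 * (4 * m + 5).choose m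
      + 3 * (4 * m + 6).choose m : ℚ) = 2 * (4 * m + 5)! / ((m + 2)! * (3 * m + 5)!) := by
  rw [Nat.cast_choose ℚ (by omega : m ≤ 4 * m + 3), Nat.cast_choose ℚ (by omega : m ≤ 4 * m + 4),
    Nat.cast_choose ℚ (by omega : m ≤ 4 * m + 5), Nat.cast_choose ℚ (by omega : m ≤ 4 * m + 6),
    show 4 * m + 3 - m = 3 * m + 3 by omega, show 4 * m + 4 - m = 3 * m + 4 by omega,
    show 4 * m + 5 - m = 3 * m + 5 by omega, show 4 * m + 6 - m = 3 * m + 6 by omega]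
  simp only [Nat.factorial_succ]
  push_cast
  field_simp
  ring

theorem coeff_tau_substitution_general (τ : PowerSeries ℚ)
    (hτ : τ = PowerSeries.X * (1 + τ) ^ 4) (n : ℕ) (hn : 1 ≤ n) :
    PowerSeries.coeff (R := ℚ) n (τ * (1 - τ - τ ^ 2)) =
      2 * Nat.factorial (4 * n + 1) /
        (Nat.factorial (n + 1) * Nat.factorial (3 * n + 2)) := by
  obtain ⟨m, rfl⟩ := Nat.exists_eq_add_of_le' hn
  have hcoeff := coeff_pow_eq_coeff_X_pow_mul_lagrangeKernel (by norm_num) hτ (m + 1)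
  have hexpand : (X - X ^ 2 - X ^ 3) * lagrangeKernel ℚ 4 (m + 1) =
      X * ((4 : ℚ) • (1 + X) ^ (4 * m + 3) + (1 + X) ^ (4 * m + 4)
        - (7 : ℚ) • (1 + X) ^ (4 * m + 5) + (3 : ℚ) • (1 + X) ^ (4 * m + 6)) := by
    rw [lagrangeKernel, show 4 * (m + 1) - 1 = 4 * m + 3 by omega]
    simp only [smul_eq_C_mul, map_ofNat]
    push_cast
    ring
  calc coeff (R := ℚ) (m + 1) (τ * (1 - τ - τ ^ 2))
      = coeff (m + 1) ((X - X ^ 2 - X ^ 3) * lagrangeKernel ℚ 4 (m + 1)) := by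
        rw [show τ * (1 - τ - τ ^ 2) = τ ^ 1 - τ ^ 2 - τ ^ 3 by ring, map_sub, map_sub, hcoeff,
          hcoeff, hcoeff, ← map_sub, ← map_sub, ← sub_mul, ← sub_mul, pow_one]
    _ = 4 * ((4 * m + 3).choose m : ℚ) + (4 * m + 4).choose m - 7 * (4 * m + 5).choose m
          + 3 * (4 * m + 6).choose m := by
        simp [hexpand, coeff_one_add_X_pow_eq_choose]
    _ = _ := by
        rw [four_mul_choose_add_choose_sub_seven_mul_choose_add_three_mul_choose,
          show 4 * (m + 1) + 1 = 4 * m + 5 by ring, show 3 * (m + 1) + 2 = 3 * m + 5 by ring]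

/-- If `τ = y(1+τ)⁴` with `τ(0) = 0`, then the coefficient of `yⁿ` in
`φ = τ(1−τ−τ²)` equals `2(4n+1)! / ((n+1)!(3n+2)!)` for `n ≥ 1`. -/
theorem coeff_tau_substitution (τ : PowerSeries ℚ)
    (h0 : PowerSeries.constantCoeff τ = 0)
    (hτ : τ = PowerSeries.X * (1 + τ) ^ 4) (n : ℕ) (hn : 1 ≤ n) :
    PowerSeries.coeff (R := ℚ) n (τ * (1 - τ - τ ^ 2)) =
      2 * Nat.factorial (4 * n + 1) /
        (Nat.factorial (n + 1) * Nat.factorial (3 * n + 2)) :=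
  coeff_tau_substitution_general τ hτ n hn
end

section
/- The formal power series ν = (1/32)(−1 + 12y + 8y^2 + (1−8y)^{3/2}) satisfies y^2 − 11y^3 − y^4 + (−1+12y+8y^2)ν − 16ν^2 = 0, and for n ≥ 2 its coefficient of y^{n+1} equals 3·2^{n-2}(2n−2)!/((n−1)!(n+1)!). -/
open PowerSeries

/-- The variable `y`. -/
noncomputable def yv : PowerSeries ℚ := PowerSeries.X

/-- The binomial series `(1 − 8y)^{3/2}`, with constant term `1`:
its `n`-th coefficient is `(3/2 choose n)·(−8)ⁿ`. -/
noncomputable def sqrtCube : PowerSeries ℚ :=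
  PowerSeries.mk fun n =>
    ((∏ i ∈ Finset.range n, ((3 : ℚ) / 2 - i)) / Nat.factorial n) * (-8) ^ n

/-- The series `ν = (1/32)(−1 + 12y + 8y² + (1−8y)^{3/2})`. -/
noncomputable def nuSeries : PowerSeries ℚ :=
  PowerSeries.C (R := ℚ) (1 / 32) * (-1 + 12 * yv + 8 * yv ^ 2 + sqrtCube)

open scoped Nat

/-!
Since `(1 − 8y)^{3/2}` is the binomial series of exponent `3/2` rescaled by `−8`, and binomial
series multiply by adding exponents, its square is the polynomial `(1 − 8y)³`. Writing
`P = −1 + 12y + 8y²`, we have `32ν − P = (1 − 8y)^{3/2}`, so `64` times the quadratic expression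
is `P² − (1 − 8y)³ + 64(y² − 11y³ − y⁴)`, which vanishes identically. The coefficients `c n` of
`(1 − 8y)^{3/2}` obey `(n + 1) c (n + 1) = (8n − 12) c n`, and the closed form satisfies the same
first-order recurrence from `c 3 = 32` on.
-/

theorem sqrtCube_eq_rescale_binomialSeries :
    sqrtCube = rescale (-8) (binomialSeries ℚ (3 / 2 : ℚ)) := by
  ext n
  rw [sqrtCube, coeff_mk, coeff_rescale, binomialSeries_coeff, Ring.choose_eq_smul,
    ← Polynomial.aeval_eq_smeval, Polynomial.aeval_def, Polynomial.eval₂_eq_eval_map,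
    descPochhammer_map, descPochhammer_eval_eq_prod_range]
  simp only [smul_eq_mul, mul_one]
  ring

theorem rescale_binomialSeries_natCast {A : Type*} [CommRing A] [Algebra ℚ A] (a : A) (d : ℕ) :
    rescale a (binomialSeries A (d : ℚ)) = (1 + C a * X) ^ d := by
  rw [binomialSeries_nat, map_pow, map_add, map_one, rescale_X]

theorem sqrtCube_sq : sqrtCube ^ 2 = (1 - 8 * yv) ^ 3 := by
  rw [sqrtCube_eq_rescale_binomialSeries, ← map_pow, sq, ← binomialSeries_add,
    show (3 / 2 + 3 / 2 : ℚ) = (3 : ℕ) by norm_num, rescale_binomialSeries_natCast, yv,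
    map_neg, map_ofNat, neg_mul, ← sub_eq_add_neg]

theorem succ_mul_coeff_succ_sqrtCube (n : ℕ) :
    (n + 1 : ℚ) * coeff (n + 1) sqrtCube = (8 * n - 12) * coeff n sqrtCube := by
  simp only [sqrtCube, coeff_mk, Finset.prod_range_succ, Nat.factorial_succ, pow_succ]
  push_cast
  field_simp
  ring

theorem coeff_add_three_sqrtCube (m : ℕ) :
    coeff (m + 3) sqrtCube = 96 * 2 ^ m * (2 * m + 2)! / ((m + 1)! * (m + 3)!) := by
  induction m with
  | zero => norm_num [sqrtCube, Finset.prod_range_succ, Nat.factorial]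
  | succ m ih =>
    have hrec : coeff (m + 4) sqrtCube = (8 * m + 12) / (m + 4) * coeff (m + 3) sqrtCube := by
      rw [div_mul_eq_mul_div, eq_div_iff (by positivity)]
      linear_combination (norm := (push_cast; ring)) succ_mul_coeff_succ_sqrtCube (m + 3)
    rw [hrec, ih, show 2 * (m + 1) + 2 = 2 * m + 2 + 1 + 1 by ring,
      Nat.factorial_succ (2 * m + 2 + 1), Nat.factorial_succ (2 * m + 2),
      Nat.factorial_succ (m + 1), Nat.factorial_succ (m + 3)]
    push_cast
    field_simp
    ring

theorem coeff_nuSeries_of_three_le {n : ℕ} (hn : 3 ≤ n) :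
    coeff n nuSeries = coeff n sqrtCube / 32 := by
  have hn0 : n ≠ 0 := by omega
  have hn1 : n ≠ 1 := by omega
  have hn2 : n ≠ 2 := by omega
  simp only [nuSeries, ← map_ofNat C, yv, coeff_C_mul, map_add, map_neg, coeff_one, coeff_X,
    coeff_X_pow, hn0, hn1, hn2, ↓reduceIte, neg_zero, mul_zero, add_zero, zero_add]
  ring

theorem thirtytwo_mul_nuSeries :
    32 * nuSeries = -1 + 12 * yv + 8 * yv ^ 2 + sqrtCube := by
  rw [nuSeries, ← mul_assoc, ← map_ofNat C, ← map_mul]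
  norm_num

/-- `ν` satisfies `y² − 11y³ − y⁴ + (−1+12y+8y²)ν − 16ν² = 0`, and for `n ≥ 2`
its coefficient of `y^{n+1}` equals `3·2^{n−2}(2n−2)!/((n−1)!(n+1)!)`. -/
theorem nuSeries_spec :
    (yv ^ 2 - 11 * yv ^ 3 - yv ^ 4 + (-1 + 12 * yv + 8 * yv ^ 2) * nuSeries
        - 16 * nuSeries ^ 2 = 0) ∧
    ∀ n : ℕ, 2 ≤ n →
      PowerSeries.coeff (R := ℚ) (n + 1) nuSeries =
        3 * 2 ^ (n - 2) * Nat.factorial (2 * n - 2) /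
          (Nat.factorial (n - 1) * Nat.factorial (n + 1)) := by
  refine ⟨?_, fun n hn => ?_⟩
  · have h64 : (64 : ℚ⟦X⟧) ≠ 0 := fun h => by
      simpa [map_ofNat] using congrArg constantCoeff h
    refine (mul_eq_zero_iff_left h64).mp ?_
    linear_combination
      (-1 + 12 * yv + 8 * yv ^ 2 - 32 * nuSeries - sqrtCube) * thirtytwo_mul_nuSeries - sqrtCube_sq
  · obtain ⟨m, rfl⟩ := Nat.exists_eq_add_of_le' hn
    rw [coeff_nuSeries_of_three_le (by omega), coeff_add_three_sqrtCube, Nat.add_sub_cancel,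
      show 2 * (m + 2) - 2 = 2 * m + 2 by omega, show m + 2 - 1 = m + 1 by omega]
    ring
end
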